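/- Let 2 ≤ d ≤ d' and 1 ≤ m < d be integers, let ω = e^{2πi/d}, and let H be an m×d partial Hadamard matrix. For l ∈ {0,…,d'−1} and a ∈ {0,…,d−1} define Q_l^a ∈ M_{d×d'} by Q_l^a(r,j) = ω^{a·r} if j ≡ r + l (mod d') and 0 otherwise (rows r ∈ {0,…,d−1}, columns j ∈ {0,…,d'−1}), and for y ∈ {1,…,m} define H_y ∈ M_{d×d'} by H_y(r,j) = H(y,r) if j = r and 0 otherwise. Set Z₀ = {Q_l^a : 1 ≤ l ≤ d'−1, 0 ≤ a ≤ d−1} and Z₁ = {H_y : 1 ≤ y ≤ m}. Then Z₀ ∪ Z₁ is a (d(d'−1)+m)-number USV1Bd in M_{d×d'} (equivalently, a (d(d'−1)+m)-number UMEB in ℂ^d ⊗ ℂ^{d'}) if and only if H cannot be extended to an (m+1)×d partial Hadamard matrix. -/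

import Mathlib

open Matrix

/-- The matrix `Q_l^a ∈ M_{d×d'}` with `Q_l^a(r,j) = ω^{a·r}` (`ω = e^{2πi/d}`) if
`j ≡ r + l (mod d')`, and `0` otherwise. -/
noncomputable def Qmat (d d' : ℕ) (l a : ℕ) : Matrix (Fin d) (Fin d') ℂ :=
  fun r j => if (j : ℕ) % d' = ((r : ℕ) + l) % d'
    then Complex.exp (2 * Real.pi * Complex.I / d) ^ (a * (r : ℕ)) else 0

/-- The matrix `H_y ∈ M_{d×d'}` with `H_y(r,j) = H(y,r)` if `j = r` and `0` otherwise. -/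
def Hmat (d d' m : ℕ) (H : Matrix (Fin m) (Fin d) ℂ) (y : Fin m) :
    Matrix (Fin d) (Fin d') ℂ :=
  fun r j => if (j : ℕ) = (r : ℕ) then H y r else 0

/-! Every matrix of `Z₀ ∪ Z₁` is supported on the graph of a cyclic shift
`r ↦ r + l (mod d')`, with `l = 0` exactly on `Z₁`. Matrices supported on graphs of shifts that
differ pointwise are orthogonal, and a matrix supported on the graph of an injective map is a
singular-value-1 matrix iff its weights are unimodular. For a fixed shift `l ≥ 1` the characters
`r ↦ ω^{ar}`, `a < d`, form an invertible (Vandermonde) system, so a matrix orthogonal to `Z₀` is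
diagonal, `B = diag v`. Then `B ⊥ Z₁` says that `v` is orthogonal to the rows of `H`, and
`B Bᴴ = 1` says that `v` is unimodular: the singular-value-1 matrices orthogonal to `Z₀ ∪ Z₁` are
exactly the diagonal matrices of rows extending `H`. -/

open Function

section GraphMatrix

variable {α β R : Type*} [DecidableEq β]

def graphMatrix [Zero R] (σ : α → β) (c : α → R) : Matrix α β R :=
  of fun r j => if j = σ r then c r else 0

theorem eq_graphMatrix_of_apply_eq_zero [Zero R] {σ : α → β} {B : Matrix α β R}
    (h : ∀ r j, j ≠ σ r → B r j = 0) : B = graphMatrix σ fun r => B r (σ r) := by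
  ext r j
  by_cases hj : j = σ r
  · simp [graphMatrix, hj]
  · simp [graphMatrix, hj, h r j hj]

variable [Fintype β] [Semiring R] [StarRing R]

theorem graphMatrix_mul_conjTranspose [DecidableEq α] {σ : α → β} (hσ : Injective σ)
    (c : α → R) :
    graphMatrix σ c * (graphMatrix σ c)ᴴ = diagonal fun r => c r * star (c r) := by
  ext r r'
  rcases eq_or_ne r r' with rfl | h
  · simp [mul_apply, graphMatrix]
  · simp [mul_apply, graphMatrix, hσ.eq_iff, h]

variable [Fintype α]

theorem trace_conjTranspose_graphMatrix_mul (σ : α → β) (c : α → R) (B : Matrix α β R) :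
    ((graphMatrix σ c)ᴴ * B).trace = ∑ r, star (c r) * B r (σ r) := by
  simp only [trace, diag, mul_apply, conjTranspose_apply, graphMatrix, of_apply, apply_ite star,
    star_zero, ite_mul, zero_mul]
  rw [Finset.sum_comm]
  simp

theorem trace_conjTranspose_graphMatrix_mul_graphMatrix_of_ne {σ τ : α → β}
    (h : ∀ r, σ r ≠ τ r) (c e : α → R) :
    ((graphMatrix σ c)ᴴ * graphMatrix τ e).trace = 0 := by
  rw [trace_conjTranspose_graphMatrix_mul]
  simp [graphMatrix, h]

theorem trace_conjTranspose_graphMatrix_mul_graphMatrix_self (σ : α → β) (c e : α → R) :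
    ((graphMatrix σ c)ᴴ * graphMatrix σ e).trace = ∑ r, star (c r) * e r := by
  rw [trace_conjTranspose_graphMatrix_mul]
  simp [graphMatrix]

end GraphMatrix

theorem Complex.mul_conj_eq_one_iff {z : ℂ} : z * (starRingEnd ℂ) z = 1 ↔ ‖z‖ = 1 := by
  rw [Complex.mul_conj', ← Complex.ofReal_pow, Complex.ofReal_eq_one,
    pow_eq_one_iff_of_nonneg (norm_nonneg z) two_ne_zero]

theorem graphMatrix_mul_conjTranspose_eq_one_iff {α β : Type*} [Fintype α] [Fintype β]
    [DecidableEq α] [DecidableEq β] {σ : α → β} (hσ : Injective σ) (c : α → ℂ) :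
    graphMatrix σ c * (graphMatrix σ c)ᴴ = 1 ↔ ∀ r, ‖c r‖ = 1 := by
  simp [graphMatrix_mul_conjTranspose hσ, diagonal_eq_one, funext_iff,
    Complex.mul_conj_eq_one_iff]

theorem sum_range_pow_eq_ite_of_pow_eq_one {K : Type*} [Field K] [DecidableEq K] {ξ : K} {n : ℕ}
    (h : ξ ^ n = 1) : ∑ r ∈ Finset.range n, ξ ^ r = if ξ = 1 then (n : K) else 0 := by
  split_ifs with hξ
  · simp [hξ]
  · rw [geom_sum_eq hξ, h, sub_self, zero_div]

theorem IsPrimitiveRoot.sum_conj_pow_mul_pow {ω : ℂ} {d a a' : ℕ} (hω : IsPrimitiveRoot ω d)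
    (ha : a < d) (ha' : a' < d) :
    ∑ r : Fin d, star (ω ^ (a * r)) * ω ^ (a' * r) = if a = a' then (d : ℂ) else 0 := by
  have hω0 : ω ≠ 0 := hω.ne_zero (by omega)
  have hconj : star ω = ω⁻¹ := (Complex.inv_eq_conj (hω.norm'_eq_one (by omega))).symm
  have hterm : ∀ r : ℕ, star (ω ^ (a * r)) * ω ^ (a' * r) = ((ω ^ a)⁻¹ * ω ^ a') ^ r := by
    intro r
    rw [star_pow, hconj, mul_pow, inv_pow, inv_pow, ← pow_mul, ← pow_mul]
  have hpow : ((ω ^ a)⁻¹ * ω ^ a') ^ d = 1 := by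
    rw [mul_pow, inv_pow, ← pow_mul, ← pow_mul, mul_comm a, mul_comm a', pow_mul, pow_mul,
      hω.pow_eq_one, one_pow, one_pow, inv_one, one_mul]
  simp only [hterm]
  rw [Fin.sum_univ_eq_sum_range (fun r => ((ω ^ a)⁻¹ * ω ^ a') ^ r),
    sum_range_pow_eq_ite_of_pow_eq_one hpow]
  refine if_congr ?_ rfl rfl
  rw [inv_mul_eq_one₀ (pow_ne_zero _ hω0)]
  exact ⟨hω.pow_inj ha ha', congrArg _⟩

theorem IsPrimitiveRoot.eq_zero_of_forall_sum_pow_mul_eq_zero {R : Type*} [CommRing R]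
    [IsDomain R] {ζ : R} {d : ℕ} (hζ : IsPrimitiveRoot ζ d) {u : Fin d → R}
    (h : ∀ a : Fin d, ∑ r : Fin d, ζ ^ (a * r : ℕ) * u r = 0) : u = 0 := by
  refine eq_zero_of_vecMul_eq_zero (M := vandermonde fun r : Fin d => ζ ^ (r : ℕ)) ?_ ?_
  · exact det_vandermonde_ne_zero_iff.2 fun r r' hr => Fin.ext (hζ.pow_inj r.2 r'.2 hr)
  · ext a
    simpa [vecMul, dotProduct, vandermonde_apply, ← pow_mul, mul_comm] using h a

section Shift

variable {d d' : ℕ} (hdd : d ≤ d')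

def cyclicShift (l : ℕ) (r : Fin d) : Fin d' :=
  ⟨(r + l) % d', Nat.mod_lt _ (r.pos.trans_le hdd)⟩

theorem cyclicShift_zero : cyclicShift hdd 0 = Fin.castLE hdd := by
  ext r
  exact Nat.mod_eq_of_lt (r.2.trans_le hdd)

theorem cyclicShift_injective (l : ℕ) : Injective (cyclicShift hdd l) := by
  intro r r' h
  have h' : (r : ℕ) % d' = r' % d' := Nat.ModEq.add_right_cancel' l (Fin.val_eq_of_eq h)
  rwa [Nat.mod_eq_of_lt (r.2.trans_le hdd), Nat.mod_eq_of_lt (r'.2.trans_le hdd),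
    ← Fin.ext_iff] at h'

theorem cyclicShift_apply_eq_iff {l l' : ℕ} (hl : l < d') (hl' : l' < d') (r : Fin d) :
    cyclicShift hdd l r = cyclicShift hdd l' r ↔ l = l' := by
  refine ⟨fun h => ?_, fun h => h ▸ rfl⟩
  have h' : l % d' = l' % d' := Nat.ModEq.add_left_cancel' r (Fin.val_eq_of_eq h)
  rwa [Nat.mod_eq_of_lt hl, Nat.mod_eq_of_lt hl'] at h'

theorem exists_cyclicShift_apply_eq (r : Fin d) (j : Fin d') :
    ∃ l < d', cyclicShift hdd l r = j := by
  refine ⟨(j + d' - r) % d', Nat.mod_lt _ j.pos, Fin.ext ?_⟩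
  have hr : (r : ℕ) < d' := r.2.trans_le hdd
  simp only [cyclicShift, Nat.add_mod_mod]
  rw [show (r : ℕ) + (j + d' - r) = j + d' by omega, Nat.add_mod_right, Nat.mod_eq_of_lt j.2]

end Shift

theorem Hmat_eq_graphMatrix {d d' m : ℕ} (hdd : d ≤ d') (H : Matrix (Fin m) (Fin d) ℂ)
    (y : Fin m) : Hmat d d' m H y = graphMatrix (Fin.castLE hdd) (H y) := by
  ext r j
  simp [Hmat, graphMatrix, Fin.ext_iff]

section Qmat

variable {d d' : ℕ}

theorem Qmat_eq_graphMatrix (hdd : d ≤ d') (l a : ℕ) :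
    Qmat d d' l a = graphMatrix (cyclicShift hdd l)
      fun r => Complex.exp (2 * Real.pi * Complex.I / d) ^ (a * r) := by
  ext r j
  simp [Qmat, graphMatrix, cyclicShift, Fin.ext_iff, Nat.mod_eq_of_lt j.2]

theorem Qmat_mul_conjTranspose (hdd : d ≤ d') (l a : ℕ) :
    Qmat d d' l a * (Qmat d d' l a)ᴴ = 1 := by
  rw [Qmat_eq_graphMatrix hdd,
    graphMatrix_mul_conjTranspose_eq_one_iff (cyclicShift_injective hdd l)]
  intro r
  rw [norm_pow, (Complex.isPrimitiveRoot_exp d r.pos.ne').norm'_eq_one r.pos.ne', one_pow]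

theorem trace_conjTranspose_Qmat_mul_Qmat (hdd : d ≤ d') {l l' a a' : ℕ} (hl : l < d')
    (hl' : l' < d') (ha : a < d) (ha' : a' < d) :
    ((Qmat d d' l a)ᴴ * Qmat d d' l' a').trace = if l = l' ∧ a = a' then (d : ℂ) else 0 := by
  rw [Qmat_eq_graphMatrix hdd, Qmat_eq_graphMatrix hdd]
  by_cases h : l = l'
  · subst h
    rw [trace_conjTranspose_graphMatrix_mul_graphMatrix_self,
      (Complex.isPrimitiveRoot_exp d (by omega)).sum_conj_pow_mul_pow ha ha']
    simp
  · rw [trace_conjTranspose_graphMatrix_mul_graphMatrix_of_ne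
      (fun r => (cyclicShift_apply_eq_iff hdd hl hl' r).not.2 h)]
    simp [h]

theorem cyclicShift_ne_castLE (hdd : d ≤ d') {l : ℕ} (hl0 : l ≠ 0) (hl : l < d') (r : Fin d) :
    cyclicShift hdd l r ≠ Fin.castLE hdd r := by
  rw [← cyclicShift_zero hdd, Ne, cyclicShift_apply_eq_iff hdd hl (r.pos.trans_le hdd)]
  exact hl0

theorem trace_conjTranspose_Qmat_mul_diag (hdd : d ≤ d') {l : ℕ} (hl0 : l ≠ 0) (hl : l < d')
    (a : ℕ) (v : Fin d → ℂ) :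
    ((Qmat d d' l a)ᴴ * graphMatrix (Fin.castLE hdd) v).trace = 0 := by
  rw [Qmat_eq_graphMatrix hdd]
  exact trace_conjTranspose_graphMatrix_mul_graphMatrix_of_ne
    (cyclicShift_ne_castLE hdd hl0 hl) _ _

theorem trace_conjTranspose_diag_mul_Qmat (hdd : d ≤ d') {l : ℕ} (hl0 : l ≠ 0) (hl : l < d')
    (a : ℕ) (v : Fin d → ℂ) :
    ((graphMatrix (Fin.castLE hdd) v)ᴴ * Qmat d d' l a).trace = 0 := by
  rw [Qmat_eq_graphMatrix hdd]
  exact trace_conjTranspose_graphMatrix_mul_graphMatrix_of_ne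
    (fun r => (cyclicShift_ne_castLE hdd hl0 hl r).symm) _ _

theorem eq_diag_of_trace_conjTranspose_Qmat_mul_eq_zero (hdd : d ≤ d')
    {B : Matrix (Fin d) (Fin d') ℂ}
    (hB : ∀ (l : Fin (d' - 1)) (a : Fin d), ((Qmat d d' (l + 1) a)ᴴ * B).trace = 0) :
    B = graphMatrix (Fin.castLE hdd) fun r => B r (Fin.castLE hdd r) := by
  refine eq_graphMatrix_of_apply_eq_zero fun r j hj => ?_
  obtain ⟨l, hl, rfl⟩ := exists_cyclicShift_apply_eq hdd r j
  have hl0 : l ≠ 0 := by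
    rintro rfl
    exact hj (congrFun (cyclicShift_zero hdd) r)
  have hω := (Complex.isPrimitiveRoot_exp d r.pos.ne').map_of_injective (starRingEnd ℂ).injective
  suffices (fun r => B r (cyclicShift hdd l r)) = 0 from congrFun this r
  refine hω.eq_zero_of_forall_sum_pow_mul_eq_zero fun a => ?_
  have h := hB ⟨l - 1, by omega⟩ a
  rw [Fin.val_mk, Nat.sub_add_cancel (Nat.one_le_iff_ne_zero.2 hl0), Qmat_eq_graphMatrix hdd,
    trace_conjTranspose_graphMatrix_mul] at h
  simpa [map_pow] using h

end Qmat

theorem trace_conjTranspose_Hmat_mul_diag {d d' m : ℕ} (hdd : d ≤ d')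
    (H : Matrix (Fin m) (Fin d) ℂ) (y : Fin m) (v : Fin d → ℂ) :
    ((Hmat d d' m H y)ᴴ * graphMatrix (Fin.castLE hdd) v).trace = ∑ r, star (H y r) * v r := by
  rw [Hmat_eq_graphMatrix hdd, trace_conjTranspose_graphMatrix_mul_graphMatrix_self]

section UmebFamily

variable {d d' m : ℕ} {H : Matrix (Fin m) (Fin d) ℂ}

/-- The family `Z₀ ∪ Z₁`, with `Q_{l+1}^a` indexed by `(l, a)`. -/
noncomputable def umebFamily (d d' m : ℕ) (H : Matrix (Fin m) (Fin d) ℂ) :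
    (Fin (d' - 1) × Fin d) ⊕ Fin m → Matrix (Fin d) (Fin d') ℂ :=
  Sum.elim (fun la => Qmat d d' ((la.1 : ℕ) + 1) (la.2 : ℕ)) (Hmat d d' m H)

theorem umebFamily_mul_conjTranspose (hdd : d ≤ d') (hHmod : ∀ y j, ‖H y j‖ = 1) (x) :
    umebFamily d d' m H x * (umebFamily d d' m H x)ᴴ = 1 := by
  rcases x with ⟨l, a⟩ | y
  · exact Qmat_mul_conjTranspose hdd _ _
  · rw [umebFamily, Sum.elim_inr, Hmat_eq_graphMatrix hdd,
      graphMatrix_mul_conjTranspose_eq_one_iff (Fin.castLE_injective hdd)]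
    exact hHmod y

theorem trace_conjTranspose_umebFamily_mul (hdd : d ≤ d') (hHmod : ∀ y j, ‖H y j‖ = 1)
    (hHorth : ∀ y y' : Fin m, y ≠ y' → ∑ j, (starRingEnd ℂ) (H y j) * H y' j = 0) (x x') :
    ((umebFamily d d' m H x)ᴴ * umebFamily d d' m H x').trace =
      if x = x' then (d : ℂ) else 0 := by
  rcases x with ⟨l, a⟩ | y <;> rcases x' with ⟨l', a'⟩ | y'
  · simp [umebFamily, trace_conjTranspose_Qmat_mul_Qmat hdd (Nat.add_lt_of_lt_sub l.2)
      (Nat.add_lt_of_lt_sub l'.2) a.2 a'.2, Fin.ext_iff]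
  · simp [umebFamily, Hmat_eq_graphMatrix hdd,
      trace_conjTranspose_Qmat_mul_diag hdd (Nat.succ_ne_zero _) (Nat.add_lt_of_lt_sub l.2)]
  · simp [umebFamily, Hmat_eq_graphMatrix hdd,
      trace_conjTranspose_diag_mul_Qmat hdd (Nat.succ_ne_zero _) (Nat.add_lt_of_lt_sub l'.2)]
  · simp only [umebFamily, Sum.elim_inr, Hmat_eq_graphMatrix hdd H y',
      trace_conjTranspose_Hmat_mul_diag, Sum.inr.injEq]
    split_ifs with h
    · simp [h, Complex.conj_mul', hHmod]
    · exact hHorth y y' h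

end UmebFamily

theorem umeb_iff_unextendible_hadamard (d d' m : ℕ)
    (hdd : d ≤ d')
    (H : Matrix (Fin m) (Fin d) ℂ)
    (hHmod : ∀ y j, ‖H y j‖ = 1)
    (hHorth : ∀ y y' : Fin m, y ≠ y' →
      ∑ j, (starRingEnd ℂ) (H y j) * H y' j = 0) :
    (let F : (Fin (d' - 1) × Fin d) ⊕ Fin m → Matrix (Fin d) (Fin d') ℂ :=
      Sum.elim (fun la => Qmat d d' ((la.1 : ℕ) + 1) (la.2 : ℕ)) (Hmat d d' m H)
     (∀ x, F x * (F x)ᴴ = 1) ∧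
     (∀ x y, ((F x)ᴴ * F y).trace = if x = y then (d : ℂ) else 0) ∧
     (∀ B : Matrix (Fin d) (Fin d') ℂ,
        (∀ x, ((F x)ᴴ * B).trace = 0) → ¬ (B * Bᴴ = 1)))
    ↔ ¬ ∃ v : Fin d → ℂ, (∀ i, ‖v i‖ = 1) ∧
          (∀ y : Fin m, ∑ j, (starRingEnd ℂ) (H y j) * v j = 0) := by
  refine (and_iff_right (umebFamily_mul_conjTranspose hdd hHmod)).trans
    ((and_iff_right (trace_conjTranspose_umebFamily_mul hdd hHmod hHorth)).trans ?_)
  have hdiag_unitary := graphMatrix_mul_conjTranspose_eq_one_iff (Fin.castLE_injective hdd)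
  constructor
  · rintro hZ ⟨v, hv, horth⟩
    refine hZ (graphMatrix (Fin.castLE hdd) v) ?_ ((hdiag_unitary v).2 hv)
    rintro (⟨l, a⟩ | y)
    · exact trace_conjTranspose_Qmat_mul_diag hdd (Nat.succ_ne_zero _)
        (Nat.add_lt_of_lt_sub l.2) a v
    · exact (trace_conjTranspose_Hmat_mul_diag hdd H y v).trans (horth y)
  · rintro hH B hB hBB
    obtain ⟨v, rfl⟩ : ∃ v, B = graphMatrix (Fin.castLE hdd) v :=
      ⟨_, eq_diag_of_trace_conjTranspose_Qmat_mul_eq_zero hdd fun l a => hB (.inl (l, a))⟩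
    exact hH ⟨v, (hdiag_unitary v).1 hBB,
      fun y => (trace_conjTranspose_Hmat_mul_diag hdd H y v).symm.trans (hB (.inr y))⟩
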